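/- arXiv:math/9906038 — 2 statements merged into one kernel-verified Lean document; each statement's English description precedes it below -/
import Mathlib

section
/- Let 1 → N →ʲ E →ᵖ G → 1 be a group extension and let s, s' : G → E be two sections of p, with factor sets f and f' and induced quasi-actions L and L' respectively. Since s(x) * (s'(x))⁻¹ ∈ ker p = range j, there is a unique 1-cochain γ : G → N with j(γ(x)) = s(x) * (s'(x))⁻¹. Then the quasi-actions differ pointwise by inner automorphisms of N: L'(x)(n) = (γ(x))⁻¹ * L(x)(n) * γ(x) for all x ∈ G and n ∈ N; in particular, the induced outer action of G on N is independent of the choice of section. -/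
theorem quasi_actions_differ_by_inner_general {N E G : Type*} [Group N] [Group E] [Group G]
    (j : N →* E) (hj : Function.Injective j)
    (s : G → E)
    (s' : G → E)
    (L : G → MulAut N) (hL : ∀ (x : G) (n : N), j (L x n) = s x * j n * (s x)⁻¹)
    (L' : G → MulAut N) (hL' : ∀ (x : G) (n : N), j (L' x n) = s' x * j n * (s' x)⁻¹)
    (γ : G → N) (hγ : ∀ x : G, j (γ x) = s x * (s' x)⁻¹) :
    ∀ (x : G) (n : N), L' x n = (γ x)⁻¹ * L x n * γ x := by
  intro x n
  apply hj
  simp only [map_mul, map_inv, hL', hL, hγ]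
  group

/-- For two sections `s, s'` of a group extension `1 → N →ʲ E →ᵖ G → 1`, with `γ : G → N`
the unique 1-cochain satisfying `j (γ x) = s x * (s' x)⁻¹`, the induced quasi-actions differ
pointwise by inner automorphisms of `N`: `L' x n = (γ x)⁻¹ * L x n * γ x`. In particular the
induced outer action of `G` on `N` is independent of the choice of section. -/
theorem quasi_actions_differ_by_inner {N E G : Type*} [Group N] [Group E] [Group G]
    (j : N →* E) (p : E →* G) (hj : Function.Injective j) (hp : Function.Surjective p)
    (hrange : j.range = p.ker)
    (s : G → E) (hs : ∀ x : G, p (s x) = x)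
    (s' : G → E) (hs' : ∀ x : G, p (s' x) = x)
    (L : G → MulAut N) (hL : ∀ (x : G) (n : N), j (L x n) = s x * j n * (s x)⁻¹)
    (L' : G → MulAut N) (hL' : ∀ (x : G) (n : N), j (L' x n) = s' x * j n * (s' x)⁻¹)
    (γ : G → N) (hγ : ∀ x : G, j (γ x) = s x * (s' x)⁻¹) :
    ∀ (x : G) (n : N), L' x n = (γ x)⁻¹ * L x n * γ x :=
  quasi_actions_differ_by_inner_general j hj s s' L hL L' hL' γ hγ
end

section
/- Let 1 → N →ʲ E →ᵖ G → 1 be a group extension and let s, s' : G → E be two sections of p with factor sets f and f' respectively, whose induced quasi-actions coincide: L(x) = L'(x) for all x ∈ G. Let γ : G → N be the unique 1-cochain with j(γ(x)) = s(x) * (s'(x))⁻¹. Then the factor sets are cohomologous in the classical sense relative to L: for all x, y ∈ G, f(x,y) * γ(x*y) = γ(x) * L(x)(γ(y)) * f'(x,y), where all values of γ are central in N. -/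
/-!
Since `L x = L' x`, conjugation by `s x` and by `s' x` agree on `j(N)`, so `s x * (s' x)⁻¹`
centralizes `j(N)`; by injectivity of `j` the values of `γ` are central in `N`. Commuting
`γ x` past `L x (γ y)` then turns the cocycle identity, after applying `j`, into the
telescoping product `s x * s y * (s' (x * y))⁻¹` on both sides.
-/

theorem mul_inv_commute_conj_of_conj_eq {E : Type*} [Group E] {a b e : E}
    (h : a * e * a⁻¹ = b * e * b⁻¹) : Commute (a * b⁻¹) (b * e * b⁻¹) :=
  calc a * b⁻¹ * (b * e * b⁻¹) = a * e * a⁻¹ * (a * b⁻¹) := by group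
    _ = b * e * b⁻¹ * (a * b⁻¹) := by rw [h]

theorem mem_center_of_map_eq_mul_inv {N E : Type*} [Group N] [Group E] {j : N →* E}
    (hj : Function.Injective j) {a b : E} {c : N} (hc : j c = a * b⁻¹) (σ : MulAut N)
    (hσa : ∀ n, j (σ n) = a * j n * a⁻¹) (hσb : ∀ n, j (σ n) = b * j n * b⁻¹) :
    c ∈ Subgroup.center N := by
  rw [Subgroup.mem_center_iff]
  intro g
  have hg : j g = b * j (σ.symm g) * b⁻¹ := by rw [← hσb, MulEquiv.apply_symm_apply]
  apply hj
  rw [map_mul, map_mul, hc, hg]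
  exact (mul_inv_commute_conj_of_conj_eq (by rw [← hσa, hσb])).eq.symm

theorem factor_sets_cohomologous_of_same_action_general {N E G : Type*} [Group N] [Group E] [Group G]
    (j : N →* E) (hj : Function.Injective j)
    (s : G → E)
    (s' : G → E)
    (f : G → G → N) (hf : ∀ x y : G, j (f x y) = s x * s y * (s (x * y))⁻¹)
    (f' : G → G → N) (hf' : ∀ x y : G, j (f' x y) = s' x * s' y * (s' (x * y))⁻¹)
    (L : G → MulAut N) (hL : ∀ (x : G) (n : N), j (L x n) = s x * j n * (s x)⁻¹)
    (L' : G → MulAut N) (hL' : ∀ (x : G) (n : N), j (L' x n) = s' x * j n * (s' x)⁻¹)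
    (hLL' : ∀ x : G, L x = L' x)
    (γ : G → N) (hγ : ∀ x : G, j (γ x) = s x * (s' x)⁻¹) :
    (∀ x : G, γ x ∈ Subgroup.center N) ∧
      ∀ x y : G, f x y * γ (x * y) = γ x * L x (γ y) * f' x y := by
  have hcentral : ∀ x, γ x ∈ Subgroup.center N := fun x =>
    mem_center_of_map_eq_mul_inv hj (hγ x) (L x) (hL x) (fun n => hLL' x ▸ hL' x n)
  refine ⟨hcentral, fun x y => hj ?_⟩
  rw [← Subgroup.mem_center_iff.mp (hcentral x) (L x (γ y))]
  simp only [map_mul, hf, hf', hγ, hL]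
  group

/-- If two sections `s, s'` of a group extension `1 → N →ʲ E →ᵖ G → 1`, with factor sets
`f, f'`, induce the same quasi-action (`L x = L' x` for all `x`), then the factor sets
are cohomologous in the classical sense relative to `L` via the 1-cochain `γ` determined
by `j (γ x) = s x * (s' x)⁻¹`: one has `f x y * γ (x*y) = γ x * L x (γ y) * f' x y`,
where all values of `γ` are central in `N`. -/
theorem factor_sets_cohomologous_of_same_action {N E G : Type*} [Group N] [Group E] [Group G]
    (j : N →* E) (p : E →* G) (hj : Function.Injective j) (hp : Function.Surjective p)
    (hrange : j.range = p.ker)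
    (s : G → E) (hs : ∀ x : G, p (s x) = x)
    (s' : G → E) (hs' : ∀ x : G, p (s' x) = x)
    (f : G → G → N) (hf : ∀ x y : G, j (f x y) = s x * s y * (s (x * y))⁻¹)
    (f' : G → G → N) (hf' : ∀ x y : G, j (f' x y) = s' x * s' y * (s' (x * y))⁻¹)
    (L : G → MulAut N) (hL : ∀ (x : G) (n : N), j (L x n) = s x * j n * (s x)⁻¹)
    (L' : G → MulAut N) (hL' : ∀ (x : G) (n : N), j (L' x n) = s' x * j n * (s' x)⁻¹)
    (hLL' : ∀ x : G, L x = L' x)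
    (γ : G → N) (hγ : ∀ x : G, j (γ x) = s x * (s' x)⁻¹) :
    (∀ x : G, γ x ∈ Subgroup.center N) ∧
      ∀ x y : G, f x y * γ (x * y) = γ x * L x (γ y) * f' x y :=
  factor_sets_cohomologous_of_same_action_general j hj s s' f hf f' hf' L hL L' hL' hLL' γ hγ
end
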